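/- arXiv:2006.14798 — 3 statements merged into one kernel-verified Lean document; each statement's English description precedes it below -/
import Mathlib

section
/- For a convex loss problem min_{u,w,z} ℓ(z, y) + β‖w‖₁ subject to z = Σ_j Σ_k (X_k u_j)₊ w_j with ‖u_j‖₂ ≤ 1, the Lagrange dual is max_v −ℓ*(v) subject to |Σ_k vᵀ(X_k u)₊| ≤ β for all u with ‖u‖₂ ≤ 1, where ℓ*(v) = max_z (zᵀv − ℓ(z, y)) is the Fenchel conjugate; in particular weak duality holds: the dual optimal value is at most the primal optimal value. -/
open Matrix

noncomputable def l2norm {n : ℕ} (c : Fin n → ℝ) : ℝ := Real.sqrt (∑ i, c i ^ 2)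

noncomputable def reluV {n h : ℕ} (M : Matrix (Fin n) (Fin h) ℝ) (u : Fin h → ℝ) :
    Fin n → ℝ := fun i => max 0 ((M *ᵥ u) i)

/-! The pairing of `v` with the network output `z = ∑ⱼ wⱼ gⱼ`, `gⱼ = ∑ₖ (Xₖ uⱼ)₊`, is
`∑ⱼ wⱼ ⟨v, gⱼ⟩`, and dual feasibility bounds each `|⟨v, gⱼ⟩|` by `β`, so `-⟨z, v⟩ ≤ β ‖w‖₁`.
Adding the Fenchel–Young inequality `⟨z, v⟩ - ℓ z ≤ ℓ*(v)` gives `-ℓ*(v) ≤ ℓ z + β ‖w‖₁`. -/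

theorem abs_sum_mul_le_mul_sum_abs {ι R : Type*} [CommRing R] [LinearOrder R]
    [IsStrictOrderedRing R] (s : Finset ι) (w a : ι → R) {β : R}
    (ha : ∀ j ∈ s, |a j| ≤ β) :
    |∑ j ∈ s, w j * a j| ≤ β * ∑ j ∈ s, |w j| := by
  rw [Finset.mul_sum]
  calc |∑ j ∈ s, w j * a j| ≤ ∑ j ∈ s, |w j| * |a j| := by
        simpa only [abs_mul] using Finset.abs_sum_le_sum_abs (fun j => w j * a j) s
    _ ≤ ∑ j ∈ s, β * |w j| := Finset.sum_le_sum fun j hj => by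
        rw [mul_comm β]
        exact mul_le_mul_of_nonneg_left (ha j hj) (abs_nonneg _)

theorem weak_duality_convex_loss_general (n h K m : ℕ)
    (X : Fin K → Matrix (Fin n) (Fin h) ℝ) (β : ℝ)
    (ℓ : (Fin n → ℝ) → ℝ)
    (u : Fin m → Fin h → ℝ) (w : Fin m → ℝ) (hu : ∀ j, l2norm (u j) ≤ 1)
    (z : Fin n → ℝ) (hz : z = ∑ j, ∑ k, w j • reluV (X k) (u j))
    (v : Fin n → ℝ)
    (hv : ∀ u' : Fin h → ℝ, l2norm u' ≤ 1 → |∑ k, v ⬝ᵥ reluV (X k) u'| ≤ β)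
    (lstar : ℝ) (hlstar : IsLUB {x : ℝ | ∃ z' : Fin n → ℝ, x = z' ⬝ᵥ v - ℓ z'} lstar) :
    -lstar ≤ ℓ z + β * ∑ j, |w j| := by
  have fenchel_young : z ⬝ᵥ v - ℓ z ≤ lstar := hlstar.1 ⟨z, rfl⟩
  have pairing : z ⬝ᵥ v = ∑ j, w j * ∑ k, v ⬝ᵥ reluV (X k) (u j) := by
    rw [hz, dotProduct_comm]
    simp only [dotProduct_sum, dotProduct_smul, smul_eq_mul, Finset.mul_sum]
  have bound : |z ⬝ᵥ v| ≤ β * ∑ j, |w j| := by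
    rw [pairing]
    exact abs_sum_mul_le_mul_sum_abs _ _ _ fun j _ => hv (u j) (hu j)
  linarith [neg_abs_le (z ⬝ᵥ v)]

/-- Weak duality for the convex-loss two-layer CNN problem: for every primal feasible
point `(u, w)` (with unit-norm filters) and every dual feasible `v` (satisfying the
semi-infinite constraint), `−ℓ*(v) ≤ ℓ(z) + β‖w‖₁`, where `z` is the network output and
`ℓ*(v)` is the Fenchel conjugate of the loss. -/
theorem weak_duality_convex_loss (n h K m : ℕ)
    (X : Fin K → Matrix (Fin n) (Fin h) ℝ) (β : ℝ) (hβ : 0 < β)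
    (ℓ : (Fin n → ℝ) → ℝ) (hℓ : ConvexOn ℝ Set.univ ℓ)
    (u : Fin m → Fin h → ℝ) (w : Fin m → ℝ) (hu : ∀ j, l2norm (u j) ≤ 1)
    (z : Fin n → ℝ) (hz : z = ∑ j, ∑ k, w j • reluV (X k) (u j))
    (v : Fin n → ℝ)
    (hv : ∀ u' : Fin h → ℝ, l2norm u' ≤ 1 → |∑ k, v ⬝ᵥ reluV (X k) u'| ≤ β)
    (lstar : ℝ) (hlstar : IsLUB {x : ℝ | ∃ z' : Fin n → ℝ, x = z' ⬝ᵥ v - ℓ z'} lstar) :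
    -lstar ≤ ℓ z + β * ∑ j, |w j| :=
  weak_duality_convex_loss_general n h K m X β ℓ u w hu z hz v hv lstar hlstar
end

section
/- For the max-pooling dual constraint: for fixed sign patterns, the value max over u in the unit ℓ₂ ball of Σ_k vᵀD(S^k)X_k u subject to (2D(S^k) − I)X_k u ≥ 0 for all k equals, by Lagrangian duality, min over α_k ≥ 0 of ‖Σ_k (vᵀD(S^k)X_k + α_kᵀ(2D(S^k) − I)X_k)‖₂, provided a strictly feasible u exists. -/
/-!
Let `g_j` be the rows of the constraint matrices and `c` the objective vector. Project `-c` onto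
the closure `K` of the cone generated by the `g_j`: the projection `y₀` makes `w = c + y₀` lie in
the dual cone of `K` with `⟪c, w⟫ = ‖w‖²`. Hence `w / ‖w‖` is primal feasible with value `‖w‖`,
while weak duality `⟪c, u⟫ ≤ ⟪c + y, u⟫ ≤ ‖c + y‖` bounds every primal value by every dual value
`‖c + Σ α_j g_j‖`. As `y₀` is a limit of conic combinations of the `g_j`, `‖w‖` is also the
infimum of the dual values.
-/

open Matrix

open scoped RealInnerProductSpace

section ConeDuality

variable {E : Type*} [NormedAddCommGroup E] [InnerProductSpace ℝ E]

theorem inner_le_norm_add_of_inner_nonneg {c u y : E} (hy : 0 ≤ ⟪y, u⟫) (hu : ‖u‖ ≤ 1) :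
    ⟪c, u⟫ ≤ ‖c + y‖ :=
  calc ⟪c, u⟫ ≤ ⟪c + y, u⟫ := by rw [inner_add_left]; linarith
    _ ≤ ‖c + y‖ * ‖u‖ := real_inner_le_norm _ _
    _ ≤ ‖c + y‖ := mul_le_of_le_one_right (norm_nonneg _) hu

variable [CompleteSpace E]

theorem PointedCone.exists_add_mem_innerDual (K : PointedCone ℝ E) (hK : IsClosed (K : Set E))
    (c : E) : ∃ y ∈ K, c + y ∈ ProperCone.innerDual (K : Set E) ∧ ⟪c, c + y⟫ = ‖c + y‖ ^ 2 := by
  -- `y` is the metric projection of `-c` onto `K`; its variational inequality, tested at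
  -- `y + z`, `0` and `2 • y`, gives `c + y ∈ K*` and `⟪y, c + y⟫ = 0`.
  obtain ⟨y, hyK, hy⟩ := exists_norm_eq_iInf_of_complete_convex ⟨0, K.zero_mem⟩
    hK.isComplete K.convex (-c)
  have hvar := (norm_eq_iInf_iff_real_inner_le_zero K.convex hyK).mp hy
  have hneg : -c - y = -(c + y) := by abel
  simp only [hneg, inner_neg_left, neg_nonpos] at hvar
  have hdual : ∀ z ∈ K, 0 ≤ ⟪z, c + y⟫ := fun z hz => by
    simpa [real_inner_comm] using hvar (y + z) (K.add_mem hyK hz)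
  have horth : ⟪y, c + y⟫ = 0 := by
    have h0 := hvar 0 K.zero_mem
    have h2 := hvar (2 • y) (K.nsmul_mem hyK 2)
    rw [two_nsmul, add_sub_cancel_right, real_inner_comm] at h2
    rw [zero_sub, inner_neg_right, real_inner_comm] at h0
    linarith
  refine ⟨y, hyK, fun z hz => hdual z hz, ?_⟩
  rw [← real_inner_self_eq_norm_sq, inner_add_left _ y, horth, add_zero]

theorem ProperCone.mem_innerDual_closure_hull {s : Set E} {u : E}
    (hu : u ∈ ProperCone.innerDual s) :
    u ∈ ProperCone.innerDual ((PointedCone.hull ℝ s).closure : Set E) := by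
  have hhull : PointedCone.hull ℝ s ≤ (ProperCone.innerDual {u} : PointedCone ℝ E) :=
    Submodule.span_le.mpr fun x hx => by simpa [real_inner_comm] using hu hx
  intro y hy
  simpa [real_inner_comm] using closure_minimal hhull (ProperCone.innerDual {u}).isClosed hy

theorem sSup_inner_eq_sInf_norm_add (s : Set E) (c : E) :
    sSup {x : ℝ | ∃ u ∈ ProperCone.innerDual s, ‖u‖ ≤ 1 ∧ x = ⟪c, u⟫} =
      sInf {x : ℝ | ∃ y ∈ PointedCone.hull ℝ s, x = ‖c + y‖} := by
  set K := (PointedCone.hull ℝ s).closure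
  obtain ⟨y₀, hy₀, hw, hcw⟩ := K.exists_add_mem_innerDual isClosed_closure c
  set w := c + y₀
  -- `u₀ = 0` when `w = 0`, since `0⁻¹ = 0`
  set u₀ := ‖w‖⁻¹ • w
  have hu₀ : u₀ ∈ ProperCone.innerDual (K : Set E) := (ProperCone.innerDual _).smul_mem hw
    (inv_nonneg.mpr (norm_nonneg w))
  have hu₀_norm : ‖u₀‖ ≤ 1 := by
    rw [norm_smul, norm_inv, norm_norm]
    exact inv_mul_le_one_of_le₀ le_rfl (norm_nonneg w)
  have hcu₀ : ⟪c, u₀⟫ = ‖w‖ := by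
    rw [real_inner_smul_right, hcw, sq, ← mul_assoc, inv_mul_mul_self]
  have hsup : IsGreatest {x : ℝ | ∃ u ∈ ProperCone.innerDual s, ‖u‖ ≤ 1 ∧ x = ⟪c, u⟫} ‖w‖ := by
    refine ⟨⟨u₀, ProperCone.innerDual_le_innerDual
      (PointedCone.subset_hull.trans subset_closure) hu₀, hu₀_norm, hcu₀.symm⟩, ?_⟩
    rintro x ⟨u, hu, hu1, rfl⟩
    exact inner_le_norm_add_of_inner_nonneg (ProperCone.mem_innerDual_closure_hull hu hy₀) hu1
  have hinf : IsGLB {x : ℝ | ∃ y ∈ PointedCone.hull ℝ s, x = ‖c + y‖} ‖w‖ := by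
    refine isGLB_of_mem_closure ?_ ?_
    · rintro x ⟨y, hy, rfl⟩
      rw [← hcu₀]
      exact inner_le_norm_add_of_inner_nonneg (hu₀ (subset_closure hy)) hu₀_norm
    · exact map_mem_closure (f := fun y => ‖c + y‖) (by fun_prop) hy₀
        fun y hy => ⟨y, hy, rfl⟩
  rw [hsup.csSup_eq, hinf.csInf_eq ⟨_, 0, zero_mem _, rfl⟩]

end ConeDuality

theorem PointedCone.mem_hull_range_iff {R E ι : Type*} [Semiring R] [PartialOrder R]
    [IsOrderedRing R] [AddCommMonoid E] [Module R E] [Fintype ι] {g : ι → E} {x : E} :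
    x ∈ PointedCone.hull R (Set.range g) ↔ ∃ l : ι → R, (∀ j, 0 ≤ l j) ∧ ∑ j, l j • g j = x := by
  rw [Submodule.mem_span_range_iff_exists_fun]
  constructor
  · rintro ⟨l, rfl⟩
    exact ⟨fun j => l j, fun j => (l j).2, rfl⟩
  · rintro ⟨l, hl, rfl⟩
    exact ⟨fun j => ⟨l j, hl j⟩, rfl⟩

theorem l2norm_eq_norm_toLp {m : ℕ} (u : Fin m → ℝ) : l2norm u = ‖WithLp.toLp 2 u‖ := by
  simp [l2norm, EuclideanSpace.norm_eq]

theorem sSup_dotProduct_eq_sInf_l2norm {m : ℕ} {ι : Type*} [Fintype ι]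
    (G : Matrix ι (Fin m) ℝ) (c : Fin m → ℝ) :
    sSup {x : ℝ | ∃ u, l2norm u ≤ 1 ∧ (∀ j, 0 ≤ (G *ᵥ u) j) ∧ x = c ⬝ᵥ u} =
      sInf {x : ℝ | ∃ l : ι → ℝ, (∀ j, 0 ≤ l j) ∧ x = l2norm (c + l ᵥ* G)} := by
  have hinner (a b : Fin m → ℝ) : ⟪WithLp.toLp 2 a, WithLp.toLp 2 b⟫ = a ⬝ᵥ b := by
    simp [EuclideanSpace.inner_toLp_toLp, dotProduct_comm]
  convert sSup_inner_eq_sInf_norm_add (Set.range fun j => WithLp.toLp 2 (G j))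
    (WithLp.toLp 2 c) using 2 <;> ext x
  · constructor
    · rintro ⟨u, hu, hG, rfl⟩
      refine ⟨WithLp.toLp 2 u, ?_, by rwa [← l2norm_eq_norm_toLp], (hinner c u).symm⟩
      simpa [hinner, mulVec] using hG
    · rintro ⟨u, hu, hu1, rfl⟩
      refine ⟨WithLp.ofLp u, by rwa [l2norm_eq_norm_toLp], ?_, ?_⟩
      · simpa [hinner, mulVec] using hu
      · rw [← hinner, WithLp.toLp_ofLp]
  · simp only [PointedCone.mem_hull_range_iff]
    constructor
    · rintro ⟨l, hl, rfl⟩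
      exact ⟨_, ⟨l, hl, rfl⟩, by simp [l2norm_eq_norm_toLp, vecMul_eq_sum]⟩
    · rintro ⟨_, ⟨l, hl, rfl⟩, rfl⟩
      exact ⟨l, hl, by simp [l2norm_eq_norm_toLp, vecMul_eq_sum]⟩

theorem fixed_pattern_duality_general (n h K : ℕ)
    (X : Fin K → Matrix (Fin n) (Fin h) ℝ) (v : Fin n → ℝ)
    (D : Fin K → Matrix (Fin n) (Fin n) ℝ) :
    sSup {x : ℝ | ∃ u : Fin h → ℝ, l2norm u ≤ 1 ∧
        (∀ k, ∀ i, 0 ≤ ((((2 : ℝ) • D k - 1) * X k) *ᵥ u) i) ∧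
        x = ∑ k, v ⬝ᵥ ((D k * X k) *ᵥ u)} =
    sInf {x : ℝ | ∃ α : Fin K → Fin n → ℝ, (∀ k i, 0 ≤ α k i) ∧
        x = l2norm (∑ k,
          (Matrix.vecMul v (D k * X k) +
            Matrix.vecMul (α k) (((2 : ℝ) • D k - 1) * X k)))} := by
  set G : Matrix (Fin K × Fin n) (Fin h) ℝ :=
    .of fun p => (((2 : ℝ) • D p.1 - 1) * X p.1 : Matrix (Fin n) (Fin h) ℝ) p.2
  set c := ∑ k, v ᵥ* (D k * X k)
  have hobj (u : Fin h → ℝ) : ∑ k, v ⬝ᵥ ((D k * X k) *ᵥ u) = c ⬝ᵥ u := by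
    simp only [c, sum_dotProduct, dotProduct_mulVec]
  have hdual (α : Fin K → Fin n → ℝ) :
      ∑ k, (v ᵥ* (D k * X k) + α k ᵥ* (((2 : ℝ) • D k - 1) * X k)) =
        c + Function.uncurry α ᵥ* G := by
    rw [Finset.sum_add_distrib, vecMul_eq_sum, Fintype.sum_prod_type]
    congr 1
    simp only [vecMul_eq_sum]
    rfl
  convert sSup_dotProduct_eq_sInf_l2norm G c using 2 <;> ext x
  · simp only [Set.mem_ofPred_eq, hobj, Prod.forall]
    rfl
  · simp only [Set.mem_ofPred_eq, hdual]
    constructor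
    · rintro ⟨α, hα, rfl⟩
      exact ⟨Function.uncurry α, fun p => hα p.1 p.2, rfl⟩
    · rintro ⟨l, hl, rfl⟩
      exact ⟨Function.curry l, fun k i => hl (k, i), rfl⟩

/-- Lagrangian duality for the fixed-sign-pattern subproblem: under strict feasibility,
the maximum of `Σ_k vᵀ D(S^k) X_k u` over the unit ℓ₂ ball intersected with the cone
constraints `(2D(S^k) − I) X_k u ≥ 0` equals
`min_{α_k ≥ 0} ‖Σ_k (vᵀ D(S^k) X_k + α_kᵀ (2D(S^k) − I) X_k)‖₂`. -/
theorem fixed_pattern_duality (n h K : ℕ)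
    (X : Fin K → Matrix (Fin n) (Fin h) ℝ) (v : Fin n → ℝ)
    (S : Fin K → Set (Fin n)) [∀ k, DecidablePred (· ∈ S k)]
    (D : Fin K → Matrix (Fin n) (Fin n) ℝ)
    (hD : ∀ k, D k = Matrix.diagonal (fun i => if i ∈ S k then (1 : ℝ) else 0))
    (hslater : ∃ u : Fin h → ℝ, l2norm u < 1 ∧
      ∀ k, ∀ i, 0 < ((((2 : ℝ) • D k - 1) * X k) *ᵥ u) i) :
    sSup {x : ℝ | ∃ u : Fin h → ℝ, l2norm u ≤ 1 ∧
        (∀ k, ∀ i, 0 ≤ ((((2 : ℝ) • D k - 1) * X k) *ᵥ u) i) ∧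
        x = ∑ k, v ⬝ᵥ ((D k * X k) *ᵥ u)} =
    sInf {x : ℝ | ∃ α : Fin K → Fin n → ℝ, (∀ k i, 0 ≤ α k i) ∧
        x = l2norm (∑ k,
          (Matrix.vecMul v (D k * X k) +
            Matrix.vecMul (α k) (((2 : ℝ) • D k - 1) * X k)))} :=
  fixed_pattern_duality_general n h K X v D
end

section
/- In the two-layer linear circular CNN problem, the rescaled problem min over {u_j, w_j} with ‖u_j‖₂ ≤ 1 of (1/2)‖Σ_j X U_j w_j − y‖₂² + β Σ_j ‖w_j‖₂ has dual max_v −(1/2)‖v − y‖₂² + (1/2)‖y‖₂² subject to ‖vᵀ X̃‖_∞ ≤ β/√d, and the dual of this dual is min over z ∈ ℂ^d of (1/2)‖X̃z − y‖₂² + (β/√d)‖z‖₁, where X̃ = XF and F is the DFT matrix; strong duality holds between the latter two (convex) problems. -/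
/-!
Weak duality, in both statements, is the pointwise inequality `v y - v² / 2 ≤ |a - y|² / 2 + v Re a`
together with a bound on the cross term `vᵀ a`. For the CNN objective the bound is
`vᵀ X U w ≤ β ‖u‖₂ ‖w‖₂`: the DFT diagonalises the circulant `U`, so by Parseval
`‖(Xᵀ v)ᵀ U‖₂ = √d ‖(vᵀ X F) ⊙ conj (uᵀ F)‖₂ ≤ √d (β / √d) ‖uᵀ F‖₂ = β ‖u‖₂`.
For the `ℓ₁` problem it is `Re (vᵀ X̃ z) ≤ (β / √d) ‖z‖₁`.

For strong duality, the `ℓ₁` objective is continuous and coercive, hence has a minimiser `z`.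
Perturbing `z` along one coordinate, and shrinking it towards `0`, shows that the residual
`r = y - X̃ z` satisfies `|(r^H X̃)_k| ≤ β / √d` and `(β / √d) ‖z‖₁ ≤ Re ⟪r, X̃ z⟫`. The columns of
`X̃ = X F` are closed under conjugation (column `-k` is the conjugate of column `k`), so the real
vector `Re r` is dual feasible, and its dual value is at least the `ℓ₁` objective at `z`.
-/

open Matrix

/-- The unitary DFT matrix. -/
noncomputable def dftMatrix (d : ℕ) : Matrix (Fin d) (Fin d) ℂ :=
  Matrix.of fun j k =>
    (1 / (Real.sqrt d : ℂ)) *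
      Complex.exp (-2 * Real.pi * Complex.I * ((j : ℕ) * (k : ℕ)) / d)

open Complex ComplexConjugate Filter Topology
open scoped InnerProductSpace

lemma nonneg_of_forall_mul_add_sq_mul_nonneg {a b : ℝ}
    (h : ∀ t : ℝ, 0 < t → t ≤ 1 → 0 ≤ t * a + t ^ 2 * b) : 0 ≤ a := by
  have hlim : Tendsto (fun t => a + t * b) (𝓝[>] 0) (𝓝 a) := by
    have : Continuous fun t => a + t * b := by fun_prop
    simpa using (this.tendsto 0).mono_left nhdsWithin_le_nhds
  refine ge_of_tendsto hlim ?_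
  filter_upwards [Ioo_mem_nhdsGT one_pos] with t ht
  have := h t ht.1 ht.2.le
  nlinarith [ht.1]

lemma mul_sub_half_sq_le (v y : ℝ) (a : ℂ) : v * y - v ^ 2 / 2 ≤ ‖a - y‖ ^ 2 / 2 + v * a.re := by
  rw [← normSq_eq_norm_sq, normSq_apply]
  simp only [sub_re, ofReal_re, sub_im, ofReal_im, sub_zero]
  nlinarith [sq_nonneg (a.re - y + v), mul_self_nonneg a.im]

lemma csSup_eq_csInf_of_forall_le {α : Type*} [ConditionallyCompleteLattice α] {S P : Set α}
    (hle : ∀ s ∈ S, ∀ p ∈ P, s ≤ p) {s p : α} (hs : s ∈ S) (hp : p ∈ P) (hps : p ≤ s) :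
    sSup S = sInf P := by
  have hsp : s = p := le_antisymm (hle s hs p hp) hps
  rw [IsGreatest.csSup_eq ⟨hs, fun s' hs' => hsp ▸ hle s' hs' p hp⟩,
    IsLeast.csInf_eq ⟨hsp ▸ hp, fun p' hp' => hle s hs p' hp'⟩]

lemma ofReal_vecMul {m n : Type*} [Fintype m] (v : m → ℝ) (M : Matrix m n ℝ) :
    (fun j => ((v ᵥ* M) j : ℂ)) = (fun i => (v i : ℂ)) ᵥ* M.map ofReal :=
  funext (RingHom.map_vecMul ofRealHom M v)

lemma sum_norm_sq_vecMul_of_unitary {ι : Type*} [Fintype ι] [DecidableEq ι] {U : Matrix ι ι ℂ}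
    (hU : U * Uᴴ = 1) (h : ι → ℂ) : ∑ k, ‖(h ᵥ* U) k‖ ^ 2 = ∑ t, ‖h t‖ ^ 2 := by
  have hdot : ∀ x : ι → ℂ, ((∑ k, ‖x k‖ ^ 2 : ℝ) : ℂ) = x ⬝ᵥ star x := by
    intro x
    simp [dotProduct, mul_conj']
  apply ofReal_injective
  rw [hdot, hdot, star_vecMul, dotProduct_mulVec, vecMul_vecMul, hU, vecMul_one]

lemma norm_re_vecMul_le {ι κ : Type*} [Fintype ι] {A : Matrix ι κ ℂ} {c : ℝ} {r : ι → ℂ}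
    (hA : ∀ k, ∃ k', ∀ i, A i k' = conj (A i k))
    (hr : ∀ k, ‖(star r ᵥ* A) k‖ ≤ c) (k : κ) :
    ‖((fun i => ((r i).re : ℂ)) ᵥ* A) k‖ ≤ c := by
  obtain ⟨k', hk'⟩ := hA k
  have hsplit : ((fun i => ((r i).re : ℂ)) ᵥ* A) k =
      (conj ((star r ᵥ* A) k') + (star r ᵥ* A) k) / 2 := by
    simp only [vecMul, dotProduct, re_eq_add_conj, hk', map_sum, map_mul, conj_conj,
      Pi.star_apply, RCLike.star_def, ← Finset.sum_add_distrib, Finset.sum_div]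
    exact Finset.sum_congr rfl fun i _ => by ring
  rw [hsplit, norm_div, RCLike.norm_ofNat]
  linarith [norm_add_le (conj ((star r ᵥ* A) k')) ((star r ᵥ* A) k), hr k, hr k',
    Complex.norm_conj ((star r ᵥ* A) k')]

section DFT

variable {d : ℕ}

noncomputable def dftRoot (d : ℕ) : ℂ := exp (2 * Real.pi * I / d)

lemma conj_dftRoot : conj (dftRoot d) = (dftRoot d)⁻¹ := by
  rw [dftRoot, ← exp_conj, ← exp_neg]
  congr 1
  simp [neg_div, map_ofNat]

lemma ofReal_sqrt_natCast_ne_zero [NeZero d] : (Real.sqrt d : ℂ) ≠ 0 := by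
  simpa using NeZero.ne d

lemma dftRoot_pow_eq_pow_of_modEq [NeZero d] {a b : ℕ} (h : a ≡ b [MOD d]) :
    dftRoot d ^ a = dftRoot d ^ b := by
  have hζ : dftRoot d ^ d = 1 := (isPrimitiveRoot_exp d (NeZero.ne d)).pow_eq_one
  rw [← Nat.mod_add_div a d, ← Nat.mod_add_div b d, h, pow_add, pow_add, pow_mul, pow_mul, hζ,
    one_pow, one_pow]

lemma dftMatrix_apply_eq_dftRoot (j k : Fin d) :
    dftMatrix d j k = (dftRoot d ^ ((j : ℕ) * k))⁻¹ / (Real.sqrt d : ℂ) := by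
  rw [dftMatrix, of_apply, dftRoot, ← exp_nat_mul, ← exp_neg]
  push_cast
  ring_nf

lemma dftMatrix_comm (j k : Fin d) : dftMatrix d j k = dftMatrix d k j := by
  rw [dftMatrix_apply_eq_dftRoot, dftMatrix_apply_eq_dftRoot, mul_comm]

lemma dftMatrix_zero_left [NeZero d] (k : Fin d) :
    dftMatrix d 0 k = 1 / (Real.sqrt d : ℂ) := by
  simp [dftMatrix_apply_eq_dftRoot]

lemma dftMatrix_sub_left [NeZero d] (j s k : Fin d) :
    dftMatrix d (j - s) k = Real.sqrt d * dftMatrix d j k * conj (dftMatrix d s k) := by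
  have hmod : ((j - s : Fin d) : ℕ) * k + s * k ≡ j * k [MOD d] := by
    rw [← add_mul]
    refine Nat.ModEq.mul_right _ ?_
    conv_rhs => rw [← sub_add_cancel j s, Fin.val_add]
    exact (Nat.mod_modEq _ d).symm
  have hsqrt : (Real.sqrt d : ℂ) ≠ 0 := ofReal_sqrt_natCast_ne_zero
  have hζ : dftRoot d ≠ 0 := exp_ne_zero _
  simp only [dftMatrix_apply_eq_dftRoot, map_div₀, map_inv₀, map_pow, conj_dftRoot, conj_ofReal,
    inv_pow, inv_inv]
  rw [← dftRoot_pow_eq_pow_of_modEq hmod, pow_add]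
  field_simp

lemma dftMatrix_neg_right [NeZero d] (t k : Fin d) :
    dftMatrix d t (-k) = conj (dftMatrix d t k) := by
  have hsqrt : (Real.sqrt d : ℂ) ≠ 0 := ofReal_sqrt_natCast_ne_zero
  rw [dftMatrix_comm, ← zero_sub, dftMatrix_sub_left, dftMatrix_zero_left, dftMatrix_comm k t]
  field_simp

lemma sum_dftMatrix_row [NeZero d] (m : Fin d) :
    ∑ k, dftMatrix d m k = if m = 0 then (Real.sqrt d : ℂ) else 0 := by
  have hsqrt : (Real.sqrt d : ℂ) ≠ 0 := ofReal_sqrt_natCast_ne_zero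
  split_ifs with hm
  · subst hm
    simp only [dftMatrix_zero_left, Finset.sum_const, Finset.card_univ, Fintype.card_fin,
      nsmul_eq_mul]
    field_simp
    rw [← ofReal_pow, Real.sq_sqrt (Nat.cast_nonneg _)]
    norm_cast
  · have hζ : IsPrimitiveRoot (dftRoot d) d := isPrimitiveRoot_exp d (NeZero.ne d)
    have hη : (dftRoot d)⁻¹ ^ (m : ℕ) ≠ 1 := by
      rw [inv_pow, Ne, inv_eq_one, hζ.pow_eq_one_iff_dvd]
      exact fun h => hm (Fin.ext (Nat.eq_zero_of_dvd_of_lt h m.isLt))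
    have hηd : ((dftRoot d)⁻¹ ^ (m : ℕ)) ^ d = 1 := by
      rw [← pow_mul, mul_comm, pow_mul, inv_pow, hζ.pow_eq_one, inv_one, one_pow]
    simp only [dftMatrix_apply_eq_dftRoot, pow_mul, ← inv_pow, ← Finset.sum_div]
    rw [Fin.sum_univ_eq_sum_range (fun k => ((dftRoot d)⁻¹ ^ (m : ℕ)) ^ k), geom_sum_eq hη, hηd,
      sub_self, zero_div, zero_div]

lemma dftMatrix_mul_conjTranspose [NeZero d] : dftMatrix d * (dftMatrix d)ᴴ = 1 := by
  have hsqrt : (Real.sqrt d : ℂ) ≠ 0 := ofReal_sqrt_natCast_ne_zero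
  ext j j'
  have hrow : ∀ k,
      dftMatrix d j k * conj (dftMatrix d j' k) = dftMatrix d (j - j') k / Real.sqrt d := by
    intro k
    rw [dftMatrix_sub_left]
    field_simp
  simp only [mul_apply, conjTranspose_apply, RCLike.star_def, hrow, ← Finset.sum_div,
    sum_dftMatrix_row, sub_eq_zero, one_apply]
  split_ifs <;> simp [hsqrt]

lemma circulant_map_mul_dftMatrix [NeZero d] (u : Fin d → ℝ) (j k : Fin d) :
    ((circulant u).map ofReal * dftMatrix d) j k =
      Real.sqrt d * dftMatrix d j k * conj (((fun s => (u s : ℂ)) ᵥ* dftMatrix d) k) := by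
  rw [mul_apply, ← Equiv.sum_comp (Equiv.subLeft j)]
  simp only [Equiv.subLeft_apply, map_apply, circulant_apply, sub_sub_cancel,
    dftMatrix_sub_left, vecMul, dotProduct, map_sum, map_mul, conj_ofReal, Finset.mul_sum]
  exact Finset.sum_congr rfl fun s _ => by ring

lemma vecMul_circulant_vecMul_dftMatrix [NeZero d] (g u : Fin d → ℝ) (k : Fin d) :
    ((fun j => ((g ᵥ* circulant u) j : ℂ)) ᵥ* dftMatrix d) k =
      Real.sqrt d * ((fun t => (g t : ℂ)) ᵥ* dftMatrix d) k *
        conj (((fun s => (u s : ℂ)) ᵥ* dftMatrix d) k) := by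
  rw [ofReal_vecMul, vecMul_vecMul]
  simp only [vecMul, dotProduct, circulant_map_mul_dftMatrix, Finset.mul_sum, Finset.sum_mul]
  exact Finset.sum_congr rfl fun t _ => by ring

lemma sum_sq_vecMul_circulant_le [NeZero d] {g : Fin d → ℝ} {B : ℝ}
    (hg : ∀ k, ‖((fun t => (g t : ℂ)) ᵥ* dftMatrix d) k‖ ≤ B) (u : Fin d → ℝ) :
    ∑ j, (g ᵥ* circulant u) j ^ 2 ≤ d * B ^ 2 * ∑ s, u s ^ 2 := by
  have hreal : ∀ x : Fin d → ℝ, ∑ j, x j ^ 2 = ∑ j, ‖(fun j => (x j : ℂ)) j‖ ^ 2 := fun x => by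
    simp [norm_real, sq_abs]
  calc ∑ j, (g ᵥ* circulant u) j ^ 2
      = ∑ k, ‖((fun j => ((g ᵥ* circulant u) j : ℂ)) ᵥ* dftMatrix d) k‖ ^ 2 := by
        rw [hreal, sum_norm_sq_vecMul_of_unitary dftMatrix_mul_conjTranspose]
    _ = ∑ k, d * (‖((fun t => (g t : ℂ)) ᵥ* dftMatrix d) k‖ ^ 2 *
          ‖((fun s => (u s : ℂ)) ᵥ* dftMatrix d) k‖ ^ 2) := by
        simp only [vecMul_circulant_vecMul_dftMatrix, norm_mul, Complex.norm_conj, norm_real,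
          Real.norm_eq_abs, abs_of_nonneg (Real.sqrt_nonneg _), mul_pow,
          Real.sq_sqrt (Nat.cast_nonneg _), mul_assoc]
    _ ≤ ∑ k, d * (B ^ 2 * ‖((fun s => (u s : ℂ)) ᵥ* dftMatrix d) k‖ ^ 2) := by
        gcongr with k
        exact hg k
    _ = d * B ^ 2 * ∑ s, u s ^ 2 := by
        rw [hreal u, ← sum_norm_sq_vecMul_of_unitary dftMatrix_mul_conjTranspose, Finset.mul_sum]
        exact Finset.sum_congr rfl fun k _ => by ring

end DFT

section Lasso

variable {ι κ : Type*} [Fintype ι] [Fintype κ]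

noncomputable def dualObjective (y v : ι → ℝ) : ℝ :=
  ∑ i, v i * y i - (1 / 2) * ∑ i, v i ^ 2

noncomputable def lassoObjective (A : Matrix ι κ ℂ) (y : ι → ℝ) (c : ℝ) (z : κ → ℂ) : ℝ :=
  (1 / 2) * (∑ i, ‖(A *ᵥ z) i - (y i : ℂ)‖ ^ 2) + c * ∑ k, ‖z k‖

noncomputable def lassoResidual (A : Matrix ι κ ℂ) (y : ι → ℝ) (z : κ → ℂ) : ι → ℂ :=
  fun i => (y i : ℂ) - (A *ᵥ z) i

variable {A : Matrix ι κ ℂ} {y : ι → ℝ} {c : ℝ}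

lemma dualObjective_le_lassoObjective {v : ι → ℝ} (hv : ∀ k, ‖((fun i => (v i : ℂ)) ᵥ* A) k‖ ≤ c)
    (z : κ → ℂ) : dualObjective y v ≤ lassoObjective A y c z := by
  have hcross : ∑ i, v i * ((A *ᵥ z) i).re ≤ c * ∑ k, ‖z k‖ :=
    calc ∑ i, v i * ((A *ᵥ z) i).re = (((fun i => (v i : ℂ)) ᵥ* A) ⬝ᵥ z).re := by
          rw [← dotProduct_mulVec, dotProduct, re_sum]
          simp only [re_ofReal_mul]
      _ ≤ ∑ k, ‖((fun i => (v i : ℂ)) ᵥ* A) k‖ * ‖z k‖ := by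
          rw [dotProduct, re_sum]
          gcongr with k
          exact (re_le_norm _).trans (norm_mul _ _).le
      _ ≤ c * ∑ k, ‖z k‖ := by
          rw [Finset.mul_sum]
          gcongr with k
          exact hv k
  have hpt := fun i => mul_sub_half_sq_le (v i) (y i) ((A *ᵥ z) i)
  have := Finset.sum_le_sum fun i (_ : i ∈ Finset.univ) => hpt i
  simp only [Finset.sum_add_distrib, Finset.sum_sub_distrib, ← Finset.sum_div] at this
  rw [dualObjective, lassoObjective]
  linarith

lemma continuous_lassoObjective : Continuous (lassoObjective A y c) := by
  unfold lassoObjective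
  fun_prop

lemma exists_forall_lassoObjective_le (hc : 0 < c) :
    ∃ z, ∀ z', lassoObjective A y c z ≤ lassoObjective A y c z' := by
  refine continuous_lassoObjective.exists_forall_le
    (tendsto_atTop_mono (fun z => ?_) (tendsto_norm_cocompact_atTop.const_mul_atTop hc))
  have hnorm : ‖z‖ ≤ ∑ k, ‖z k‖ := (pi_norm_le_iff_of_nonneg (by positivity)).2 fun k =>
    Finset.single_le_sum (fun k _ => norm_nonneg (z k)) (Finset.mem_univ k)
  have : 0 ≤ (1 / 2) * ∑ i, ‖(A *ᵥ z) i - (y i : ℂ)‖ ^ 2 := by positivity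
  rw [lassoObjective]
  nlinarith

/-- First-order optimality of a minimiser `z` in the direction `w`, where `L` bounds the
one-sided directional derivative of the `ℓ₁` term. -/
lemma sum_inner_lassoResidual_le (hc : 0 ≤ c) {z : κ → ℂ}
    (hz : ∀ z', lassoObjective A y c z ≤ lassoObjective A y c z') (w : κ → ℂ) {L : ℝ}
    (hL : ∀ t : ℝ, 0 < t → t ≤ 1 → ∑ k, ‖z k + t • w k‖ ≤ ∑ k, ‖z k‖ + t * L) :
    ∑ i, ⟪lassoResidual A y z i, (A *ᵥ w) i⟫_ℝ ≤ c * L := by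
  suffices 0 ≤ -∑ i, ⟪lassoResidual A y z i, (A *ᵥ w) i⟫_ℝ + c * L by linarith
  refine nonneg_of_forall_mul_add_sq_mul_nonneg (b := (1 / 2) * ∑ i, ‖(A *ᵥ w) i‖ ^ 2)
    fun t ht ht1 => ?_
  have hexp : ∀ i, ‖(A *ᵥ (z + t • w)) i - y i‖ ^ 2 =
      ‖(A *ᵥ z) i - y i‖ ^ 2 - 2 * t * ⟪lassoResidual A y z i, (A *ᵥ w) i⟫_ℝ +
        t ^ 2 * ‖(A *ᵥ w) i‖ ^ 2 := by
    intro i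
    rw [mulVec_add, mulVec_smul, Pi.add_apply, Pi.smul_apply, add_sub_right_comm,
      norm_add_sq_real, real_inner_smul_right, norm_smul, lassoResidual, ← neg_sub,
      inner_neg_left, Real.norm_eq_abs, mul_pow, sq_abs]
    ring
  have hmin := hz (z + t • w)
  simp only [lassoObjective, hexp, Finset.sum_add_distrib, Finset.sum_sub_distrib,
    ← Finset.mul_sum, Pi.add_apply, Pi.smul_apply] at hmin
  nlinarith [mul_le_mul_of_nonneg_left (hL t ht ht1) hc]

lemma norm_star_lassoResidual_vecMul_le (hc : 0 ≤ c) {z : κ → ℂ}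
    (hz : ∀ z', lassoObjective A y c z ≤ lassoObjective A y c z') (k : κ) :
    ‖(star (lassoResidual A y z) ᵥ* A) k‖ ≤ c := by
  classical
  set h := (star (lassoResidual A y z) ᵥ* A) k
  have hL : ∀ t : ℝ, 0 < t → t ≤ 1 →
      ∑ k', ‖z k' + t • (Pi.single k (conj h) : κ → ℂ) k'‖ ≤ ∑ k', ‖z k'‖ + t * ‖h‖ := by
    intro t ht _
    calc ∑ k', ‖z k' + t • (Pi.single k (conj h) : κ → ℂ) k'‖
        ≤ ∑ k', (‖z k'‖ + t * ‖(Pi.single k (conj h) : κ → ℂ) k'‖) := by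
          gcongr with k'
          refine (norm_add_le _ _).trans_eq ?_
          rw [norm_smul, Real.norm_of_nonneg ht.le]
      _ = ∑ k', ‖z k'‖ + t * ‖h‖ := by
          rw [Finset.sum_add_distrib, ← Finset.mul_sum]
          simp [Pi.single_apply, apply_ite]
  have hinner : ∑ i, ⟪lassoResidual A y z i, (A *ᵥ Pi.single k (conj h)) i⟫_ℝ = ‖h‖ ^ 2 := by
    have hsum : ∑ i, A i k * conj h * conj (lassoResidual A y z i) = conj h * h := by
      simp only [h, vecMul, dotProduct, Finset.mul_sum, Pi.star_apply, RCLike.star_def]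
      exact Finset.sum_congr rfl fun i _ => by ring
    simp only [mulVec_single, Complex.inner, ← re_sum, Pi.smul_apply, col_apply,
      op_smul_eq_mul, hsum, conj_mul']
    norm_cast
  have key := sum_inner_lassoResidual_le hc hz _ hL
  rw [hinner] at key
  rcases (norm_nonneg h).eq_or_lt with h0 | hpos
  · rw [← h0]; exact hc
  · nlinarith

lemma mul_sum_norm_le_sum_inner_lassoResidual (hc : 0 ≤ c) {z : κ → ℂ}
    (hz : ∀ z', lassoObjective A y c z ≤ lassoObjective A y c z') :
    c * ∑ k, ‖z k‖ ≤ ∑ i, ⟪lassoResidual A y z i, (A *ᵥ z) i⟫_ℝ := by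
  have hL : ∀ t : ℝ, 0 < t → t ≤ 1 →
      ∑ k, ‖z k + t • (-z) k‖ ≤ ∑ k, ‖z k‖ + t * -∑ k, ‖z k‖ := by
    intro t _ ht1
    have hshrink : ∀ k, z k + t • (-z) k = (1 - t) • z k := fun k => by
      rw [Pi.neg_apply, smul_neg, sub_smul, one_smul, sub_eq_add_neg]
    simp only [hshrink, norm_smul, Real.norm_of_nonneg (sub_nonneg.2 ht1), ← Finset.mul_sum]
    linarith
  have key := sum_inner_lassoResidual_le hc hz (-z) hL
  simp only [mulVec_neg, Pi.neg_apply, inner_neg_right, Finset.sum_neg_distrib] at key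
  linarith

lemma exists_lassoObjective_le_dualObjective (hc : 0 < c) (hA : ∀ k, ∃ k', ∀ i, A i k' = conj (A i k)) :
    ∃ v : ι → ℝ, (∀ k, ‖((fun i => (v i : ℂ)) ᵥ* A) k‖ ≤ c) ∧
      ∃ z, lassoObjective A y c z ≤ dualObjective y v := by
  obtain ⟨z, hz⟩ := exists_forall_lassoObjective_le (A := A) (y := y) hc
  have hopt := mul_sum_norm_le_sum_inner_lassoResidual hc.le hz
  set r := lassoResidual A y z
  refine ⟨fun i => (r i).re, norm_re_vecMul_le hA (norm_star_lassoResidual_vecMul_le hc.le hz),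
    z, ?_⟩
  have hpt : ∀ i, ⟪r i, (A *ᵥ z) i⟫_ℝ = (r i).re * y i - ‖r i‖ ^ 2 := fun i => by
    have : (A *ᵥ z) i = y i - r i := by simp [r, lassoResidual]
    rw [this, inner_sub_right, real_inner_self_eq_norm_sq, Complex.inner]
    simp [mul_comm]
  have hre : ∀ i, (r i).re ^ 2 ≤ ‖r i‖ ^ 2 := fun i => by
    rw [← normSq_eq_norm_sq, normSq_apply]
    nlinarith [mul_self_nonneg (r i).im]
  have hres : ∀ i, ‖(A *ᵥ z) i - y i‖ = ‖r i‖ := fun i => norm_sub_rev _ _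
  simp only [hpt, Finset.sum_sub_distrib] at hopt
  rw [lassoObjective, dualObjective]
  simp only [hres]
  linarith [Finset.sum_le_sum fun i (_ : i ∈ Finset.univ) => hre i]

end Lasso

lemma l2norm_sq {n : ℕ} (a : Fin n → ℝ) : l2norm a ^ 2 = ∑ i, a i ^ 2 :=
  Real.sq_sqrt (Finset.sum_nonneg fun _ _ => sq_nonneg _)

lemma neg_half_sq_l2norm_sub_add_half_sq_l2norm {n : ℕ} (v y : Fin n → ℝ) :
    -(1 / 2) * l2norm (v - y) ^ 2 + (1 / 2) * l2norm y ^ 2 = dualObjective y v := by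
  simp only [dualObjective, l2norm_sq, Pi.sub_apply, sub_sq, Finset.sum_add_distrib, Finset.sum_sub_distrib,
    mul_assoc, ← Finset.mul_sum]
  ring

lemma dftMatrix_map_mul_conj_column {n d : ℕ} [NeZero d] (X : Matrix (Fin n) (Fin d) ℝ)
    (k : Fin d) : ∃ k', ∀ i, (X.map ofReal * dftMatrix d) i k' =
      conj ((X.map ofReal * dftMatrix d) i k) :=
  ⟨-k, fun _ => by simp [mul_apply, dftMatrix_neg_right]⟩

lemma dotProduct_mulVec_circulant_le {n d : ℕ} [NeZero d] {X : Matrix (Fin n) (Fin d) ℝ}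
    {v : Fin n → ℝ} {c : ℝ}
    (hv : ∀ k, ‖((fun i => (v i : ℂ)) ᵥ* (X.map ofReal * dftMatrix d)) k‖ ≤ c)
    (u w : Fin d → ℝ) :
    v ⬝ᵥ (X *ᵥ (circulant u *ᵥ w)) ≤ Real.sqrt d * c * l2norm u * l2norm w := by
  have hc : 0 ≤ c := (norm_nonneg _).trans (hv 0)
  have hg : ∀ k, ‖((fun t => ((v ᵥ* X) t : ℂ)) ᵥ* dftMatrix d) k‖ ≤ c := by
    rwa [ofReal_vecMul, vecMul_vecMul]
  have hgu : l2norm (v ᵥ* X ᵥ* circulant u) ≤ Real.sqrt d * c * l2norm u :=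
    calc l2norm (v ᵥ* X ᵥ* circulant u) ≤ Real.sqrt (d * c ^ 2 * ∑ s, u s ^ 2) :=
          Real.sqrt_le_sqrt (sum_sq_vecMul_circulant_le hg u)
      _ = Real.sqrt d * c * l2norm u := by
          rw [l2norm, Real.sqrt_mul (by positivity), Real.sqrt_mul (Nat.cast_nonneg _),
            Real.sqrt_sq hc]
  rw [dotProduct_mulVec, dotProduct_mulVec]
  calc (v ᵥ* X ᵥ* circulant u) ⬝ᵥ w ≤ l2norm (v ᵥ* X ᵥ* circulant u) * l2norm w :=
        Real.sum_mul_le_sqrt_mul_sqrt _ _ _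
    _ ≤ Real.sqrt d * c * l2norm u * l2norm w := by
        gcongr
        exact Real.sqrt_nonneg _

noncomputable def circularObjective {n d m : ℕ} (X : Matrix (Fin n) (Fin d) ℝ) (y : Fin n → ℝ)
    (β : ℝ) (u w : Fin m → Fin d → ℝ) : ℝ :=
  (1 / 2) * l2norm ((∑ j, X *ᵥ (circulant (u j) *ᵥ w j)) - y) ^ 2 + β * ∑ j, l2norm (w j)

lemma dualObjective_le_circularObjective {n d m : ℕ} [NeZero d] {X : Matrix (Fin n) (Fin d) ℝ}
    {v : Fin n → ℝ} {β : ℝ}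
    (hv : ∀ k, ‖((fun i => (v i : ℂ)) ᵥ* (X.map ofReal * dftMatrix d)) k‖ ≤ β / Real.sqrt d)
    (y : Fin n → ℝ) {u : Fin m → Fin d → ℝ} (hu : ∀ j, l2norm (u j) ≤ 1)
    (w : Fin m → Fin d → ℝ) : dualObjective y v ≤ circularObjective X y β u w := by
  set a := ∑ j, X *ᵥ (circulant (u j) *ᵥ w j)
  have hsqrt : Real.sqrt d ≠ 0 := by simpa using NeZero.ne d
  have hβ : 0 ≤ β := by
    have := mul_nonneg ((norm_nonneg _).trans (hv 0)) (Real.sqrt_nonneg d)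
    rwa [div_mul_cancel₀ _ hsqrt] at this
  have hcross : v ⬝ᵥ a ≤ β * ∑ j, l2norm (w j) := by
    rw [dotProduct_sum, Finset.mul_sum]
    gcongr with j
    have := dotProduct_mulVec_circulant_le hv (u j) (w j)
    rw [mul_div_cancel₀ _ hsqrt] at this
    have hw : 0 ≤ l2norm (w j) := Real.sqrt_nonneg _
    calc _ ≤ β * l2norm (u j) * l2norm (w j) := this
      _ ≤ β * 1 * l2norm (w j) := by gcongr; exact hu j
      _ = β * l2norm (w j) := by ring
  have hpt : ∀ i, v i * y i - v i ^ 2 / 2 ≤ (a i - y i) ^ 2 / 2 + v i * a i := fun i => by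
    simpa [← ofReal_sub, norm_real, sq_abs] using mul_sub_half_sq_le (v i) (y i) (a i)
  have := Finset.sum_le_sum fun i (_ : i ∈ Finset.univ) => hpt i
  simp only [Finset.sum_add_distrib, Finset.sum_sub_distrib, ← Finset.sum_div] at this
  rw [dualObjective, circularObjective, l2norm_sq]
  simp only [Pi.sub_apply]
  rw [dotProduct] at hcross
  linarith

/-- Two-layer linear circular CNN: the dual of the rescaled nonconvex problem is the
`ℓ_∞`-constrained concave maximization (weak duality), and strong duality holds between
this dual and its own dual, the `ℓ₁`-regularized least squares in the spectral domain. -/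
theorem circular_linear_duality (n d : ℕ) (hd : 0 < d) (m : ℕ)
    (X : Matrix (Fin n) (Fin d) ℝ) (y : Fin n → ℝ) (β : ℝ) (hβ : 0 < β) :
    (∀ p ∈ {p : ℝ | ∃ (u : Fin m → Fin d → ℝ) (w : Fin m → Fin d → ℝ),
        (∀ j, l2norm (u j) ≤ 1) ∧
        p = (1 / 2) * (l2norm ((∑ j, X *ᵥ (Matrix.circulant (u j) *ᵥ w j)) - y)) ^ 2
          + β * ∑ j, l2norm (w j)},
      sSup {x : ℝ | ∃ v : Fin n → ℝ,
        (∀ i : Fin d, 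
            ‖(Matrix.vecMul (fun i => ((v i : ℝ) : ℂ)) (X.map Complex.ofReal * dftMatrix d)) i‖
          ≤ β / Real.sqrt d) ∧
        x = -(1 / 2) * (l2norm (v - y)) ^ 2 + (1 / 2) * (l2norm y) ^ 2} ≤ p) ∧
    sSup {x : ℝ | ∃ v : Fin n → ℝ,
        (∀ i : Fin d, 
            ‖(Matrix.vecMul (fun i => ((v i : ℝ) : ℂ)) (X.map Complex.ofReal * dftMatrix d)) i‖
          ≤ β / Real.sqrt d) ∧
        x = -(1 / 2) * (l2norm (v - y)) ^ 2 + (1 / 2) * (l2norm y) ^ 2} =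
    sInf {x : ℝ | ∃ z : Fin d → ℂ,
        x = (1 / 2) * (∑ i, 
              ‖((X.map Complex.ofReal * dftMatrix d) *ᵥ z) i - ((y i : ℝ) : ℂ)‖ ^ 2)
          + (β / Real.sqrt d) * ∑ i, ‖z i‖} := by
  have : NeZero d := ⟨hd.ne'⟩
  have hc : 0 < β / Real.sqrt d := div_pos hβ (Real.sqrt_pos.2 (Nat.cast_pos.2 hd))
  obtain ⟨v₀, hv₀, z₀, hz₀⟩ :=
    exists_lassoObjective_le_dualObjective (y := y) hc (dftMatrix_map_mul_conj_column X)
  simp only [neg_half_sq_l2norm_sub_add_half_sq_l2norm]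
  refine ⟨?_, ?_⟩
  · rintro _ ⟨u, w, hu, rfl⟩
    refine csSup_le ⟨_, v₀, hv₀, rfl⟩ ?_
    rintro _ ⟨v, hv, rfl⟩
    exact dualObjective_le_circularObjective hv y hu w
  · refine csSup_eq_csInf_of_forall_le ?_ ⟨v₀, hv₀, rfl⟩ ⟨z₀, rfl⟩ hz₀
    rintro _ ⟨v, hv, rfl⟩ _ ⟨z, rfl⟩
    exact dualObjective_le_lassoObjective hv z
end
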